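/- If G and H both admit interval colorings, H is an r-regular graph, and |V(H)| = n, then the lexicographic product G[H] admits an interval coloring; moreover w(G[H]) ≤ w(G)·n + r and W(G[H]) ≥ W(G)·n + r. -/

import Mathlib

/-!
Colour `G[H]` in blocks of `n = |V(H)|` consecutive colours. The edges between the fibres over an
edge `uu'` of `G` get the `c(uu')`-th block, arranged by a symmetric Latin square so that each
vertex of these fibres sees every colour of the block once. The copy of `H` over `u` gets the `r`
colours right above the last block used at `u`: an interval colouring of the `r`-regular graph `H`
uses `r` consecutive colours at each vertex, so reduced mod `r` it stays proper and uses all of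
`0, …, r - 1` everywhere. The colours at `(u, v)` are then the consecutive blocks of the interval
of colours at `u`, followed by `r` more: again an interval. So an interval `t`-colouring of `G`
yields an interval `(t n + r)`-colouring of `G[H]`.
-/

open SimpleGraph

/-- `c` is an interval `t`-coloring of `G`: edges get colors in `{1,…,t}`, every color
`1,…,t` is used, adjacent edges get distinct colors, and the set of colors of edges
incident to any vertex is an interval of integers. -/
def IsIntervalColoring {V : Type*} (G : SimpleGraph V) (t : ℕ) (c : Sym2 V → ℕ) : Prop :=
  (∀ e ∈ G.edgeSet, 1 ≤ c e ∧ c e ≤ t) ∧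
  (∀ i, 1 ≤ i → i ≤ t → ∃ e ∈ G.edgeSet, c e = i) ∧
  (∀ v w₁ w₂, G.Adj v w₁ → G.Adj v w₂ → w₁ ≠ w₂ → c s(v, w₁) ≠ c s(v, w₂)) ∧
  (∀ v i j k, (∃ w, G.Adj v w ∧ c s(v, w) = i) → (∃ w, G.Adj v w ∧ c s(v, w) = k) →
    i ≤ j → j ≤ k → ∃ w, G.Adj v w ∧ c s(v, w) = j)

/-- `G` has an interval `t`-coloring. -/
def HasIntervalColoring {V : Type*} (G : SimpleGraph V) (t : ℕ) : Prop :=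
  ∃ c : Sym2 V → ℕ, IsIntervalColoring G t c

/-- `G` is interval colorable (`G ∈ 𝔑`). -/
def IntervalColorable {V : Type*} (G : SimpleGraph V) : Prop :=
  ∃ t : ℕ, 1 ≤ t ∧ HasIntervalColoring G t

/-- `w G`: the least number of colors in an interval coloring of `G`. -/
noncomputable def wNum {V : Type*} (G : SimpleGraph V) : ℕ :=
  sInf {t | HasIntervalColoring G t}

/-- `W G`: the greatest number of colors in an interval coloring of `G`. -/
noncomputable def WNum {V : Type*} (G : SimpleGraph V) : ℕ :=
  sSup {t | HasIntervalColoring G t}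

/-- `G` is `r`-regular: every vertex has exactly `r` neighbors. -/
def IsRegularGraph {V : Type*} (G : SimpleGraph V) (r : ℕ) : Prop :=
  ∀ v : V, (G.neighborSet v).ncard = r

/-- `c` is a proper edge coloring of `G` using colors `0,…,k-1`. -/
def IsProperEdgeColoring {V : Type*} (G : SimpleGraph V) (k : ℕ) (c : Sym2 V → ℕ) : Prop :=
  (∀ e ∈ G.edgeSet, c e < k) ∧
  (∀ v w₁ w₂, G.Adj v w₁ → G.Adj v w₂ → w₁ ≠ w₂ → c s(v, w₁) ≠ c s(v, w₂))

/-- The chromatic index `χ'(G)`. -/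
noncomputable def edgeChromaticNumber {V : Type*} (G : SimpleGraph V) : ℕ :=
  sInf {k | ∃ c : Sym2 V → ℕ, IsProperEdgeColoring G k c}

/-- `G` is 1-factorable: its edge set decomposes into perfect matchings. -/
def IsOneFactorable {V : Type*} (G : SimpleGraph V) : Prop :=
  ∃ (n : ℕ) (f : Fin n → SimpleGraph.Subgraph G),
    (∀ i, (f i).IsPerfectMatching) ∧
    (∀ e ∈ G.edgeSet, ∃! i, e ∈ (f i).edgeSet)

/-- The tensor (direct) product `G × H`. -/
def tensorProd {α β : Type*} (G : SimpleGraph α) (H : SimpleGraph β) :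
    SimpleGraph (α × β) where
  Adj p q := G.Adj p.1 q.1 ∧ H.Adj p.2 q.2
  symm := ⟨fun p q ⟨h₁, h₂⟩ => ⟨h₁.symm, h₂.symm⟩⟩
  loopless := ⟨fun p h => G.loopless.irrefl p.1 h.1⟩

/-- The strong tensor (semistrong) product `G ⊗ H`. -/
def strongTensorProd {α β : Type*} (G : SimpleGraph α) (H : SimpleGraph β) :
    SimpleGraph (α × β) where
  Adj p q := (G.Adj p.1 q.1 ∧ H.Adj p.2 q.2) ∨ (p.2 = q.2 ∧ G.Adj p.1 q.1)
  symm := ⟨fun p q h => by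
    rcases h with ⟨h₁, h₂⟩ | ⟨h₁, h₂⟩
    · exact Or.inl ⟨h₁.symm, h₂.symm⟩
    · exact Or.inr ⟨h₁.symm, h₂.symm⟩⟩
  loopless := ⟨fun p h => by
    rcases h with ⟨h₁, _⟩ | ⟨_, h₁⟩ <;> exact G.loopless.irrefl p.1 h₁⟩

/-- The strong product `G ⊠ H`. -/
def strongProd {α β : Type*} (G : SimpleGraph α) (H : SimpleGraph β) :
    SimpleGraph (α × β) where
  Adj p q := (G.Adj p.1 q.1 ∧ H.Adj p.2 q.2) ∨ (p.1 = q.1 ∧ H.Adj p.2 q.2) ∨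
    (p.2 = q.2 ∧ G.Adj p.1 q.1)
  symm := ⟨fun p q h => by
    rcases h with ⟨h₁, h₂⟩ | ⟨h₁, h₂⟩ | ⟨h₁, h₂⟩
    · exact Or.inl ⟨h₁.symm, h₂.symm⟩
    · exact Or.inr (Or.inl ⟨h₁.symm, h₂.symm⟩)
    · exact Or.inr (Or.inr ⟨h₁.symm, h₂.symm⟩)⟩
  loopless := ⟨fun p h => by
    rcases h with ⟨h₁, _⟩ | ⟨_, h₂⟩ | ⟨_, h₁⟩
    · exact G.loopless.irrefl p.1 h₁
    · exact H.loopless.irrefl p.2 h₂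
    · exact G.loopless.irrefl p.1 h₁⟩

/-- The lexicographic product (composition) `G[H]`. -/
def lexProd {α β : Type*} (G : SimpleGraph α) (H : SimpleGraph β) :
    SimpleGraph (α × β) where
  Adj p q := G.Adj p.1 q.1 ∨ (p.1 = q.1 ∧ H.Adj p.2 q.2)
  symm := ⟨fun p q h => by
    rcases h with h₁ | ⟨h₁, h₂⟩
    · exact Or.inl h₁.symm
    · exact Or.inr ⟨h₁.symm, h₂.symm⟩⟩
  loopless := ⟨fun p h => by
    rcases h with h₁ | ⟨_, h₂⟩
    · exact G.loopless.irrefl p.1 h₁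
    · exact H.loopless.irrefl p.2 h₂⟩


open Set

theorem Nat.eq_and_eq_of_mul_add_eq {n k k' j j' : ℕ} (hj : j < n) (hj' : j' < n)
    (h : k * n + j = k' * n + j') : k = k' ∧ j = j' := by
  obtain rfl : j = j' := by rw [← Nat.mul_add_mod_of_lt hj, h, Nat.mul_add_mod_of_lt hj']
  exact ⟨Nat.eq_of_mul_eq_mul_right (by omega) (Nat.add_right_cancel h), rfl⟩

theorem Nat.exists_eq_mul_add_add_one {n y : ℕ} (hn : 0 < n) (hy : 1 ≤ y) :
    ∃ k j, j < n ∧ y = k * n + j + 1 :=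
  ⟨(y - 1) / n, (y - 1) % n, Nat.mod_lt _ hn, by have := Nat.div_add_mod' (y - 1) n; omega⟩

theorem Set.OrdConnected.injOn_mod {s : Set ℕ} {r : ℕ} (hs : s.OrdConnected) (hfin : s.Finite)
    (hcard : s.ncard ≤ r) : s.InjOn (· % r) := by
  intro x hx y hy hxy
  wlog hle : x ≤ y generalizing x y
  · exact (this hy hx hxy.symm (le_of_not_ge hle)).symm
  have hIcc : (Icc x y).ncard ≤ r := (ncard_le_ncard (hs.out hx hy) hfin).trans hcard
  rw [ncard_Icc_nat] at hIcc
  have hdvd : r ∣ y - x := Nat.dvd_of_mod_eq_zero (Nat.sub_mod_eq_zero_of_mod_eq hxy.symm)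
  have := Nat.eq_zero_of_dvd_of_lt hdvd (by omega)
  omega

section IntervalColoring

variable {V : Type*} {G : SimpleGraph V} {t r : ℕ} {c : Sym2 V → ℕ}

def colorsAt (G : SimpleGraph V) (c : Sym2 V → ℕ) (v : V) : Set ℕ :=
  (fun w => c s(v, w)) '' G.neighborSet v

/-- `0` at a vertex without edges. -/
noncomputable def topColor (G : SimpleGraph V) (c : Sym2 V → ℕ) (v : V) : ℕ :=
  sSup (colorsAt G c v)

theorem image_edgeSet_eq_iUnion_colorsAt (G : SimpleGraph V) (c : Sym2 V → ℕ) :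
    c '' G.edgeSet = ⋃ v, colorsAt G c v := by
  ext i
  simp only [mem_image, mem_iUnion, colorsAt, mem_neighborSet]
  constructor
  · rintro ⟨e, he, rfl⟩
    induction e using Sym2.ind with
    | h v w => exact ⟨v, w, he, rfl⟩
  · rintro ⟨v, w, h, rfl⟩
    exact ⟨s(v, w), h, rfl⟩

theorem isIntervalColoring_iff : IsIntervalColoring G t c ↔
    c '' G.edgeSet = Icc 1 t ∧ (∀ v, (G.neighborSet v).InjOn (fun w => c s(v, w))) ∧
      ∀ v, (colorsAt G c v).OrdConnected := by
  rw [Subset.antisymm_iff, and_assoc]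
  refine and_congr ?_ (and_congr ?_ (and_congr ?_ ?_))
  · rw [image_subset_iff]
    rfl
  · exact ⟨fun h i hi => h i hi.1 hi.2, fun h i h₁ h₂ => h ⟨h₁, h₂⟩⟩
  · exact forall_congr' fun v => ⟨fun h w₁ h₁ w₂ h₂ => not_imp_not.1 (h w₁ w₂ h₁ h₂),
      fun h w₁ w₂ h₁ h₂ => mt (h h₁ h₂)⟩
  · exact forall_congr' fun v => ⟨fun h => ⟨fun i hi k hk j hj => h i j k hi hk hj.1 hj.2⟩,
      fun h i j k hi hk h₁ h₂ => h.out hi hk ⟨h₁, h₂⟩⟩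

namespace IsIntervalColoring

theorem exists_adj (hc : IsIntervalColoring G t c) (ht : 1 ≤ t) : ∃ v w, G.Adj v w := by
  obtain ⟨e, he, -⟩ := hc.2.1 1 le_rfl ht
  induction e using Sym2.ind with
  | h v w => exact ⟨v, w, he⟩

theorem le_card_sym2 [Fintype V] (hc : IsIntervalColoring G t c) : t ≤ Fintype.card (Sym2 V) := by
  have hsurj : SurjOn c (Finset.univ : Finset (Sym2 V)) (Finset.Icc 1 t) := by
    rw [Finset.coe_univ, Finset.coe_Icc, ← (isIntervalColoring_iff.1 hc).1]
    exact (surjOn_image c _).mono (subset_univ _) Subset.rfl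
  simpa using Finset.card_le_card_of_surjOn c hsurj

theorem colorsAt_subset (hc : IsIntervalColoring G t c) (v : V) : colorsAt G c v ⊆ Icc 1 t := by
  rintro _ ⟨w, hw, rfl⟩
  exact hc.1 _ hw

theorem mem_Icc_topColor {v w : V} (hc : IsIntervalColoring G t c) (h : G.Adj v w) :
    c s(v, w) ∈ Icc 1 (topColor G c v) :=
  ⟨(hc.1 _ h).1, le_csSup (bddAbove_Icc.mono (hc.colorsAt_subset v)) ⟨w, h, rfl⟩⟩

theorem topColor_le (hc : IsIntervalColoring G t c) (v : V) : topColor G c v ≤ t :=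
  csSup_le' fun _ hi => (hc.colorsAt_subset v hi).2

theorem exists_topColor_eq (hc : IsIntervalColoring G t c) (ht : 1 ≤ t) :
    ∃ v, topColor G c v = t := by
  obtain ⟨e, he, hce⟩ := hc.2.1 t ht le_rfl
  induction e using Sym2.ind with
  | h v w => exact ⟨v, (hc.topColor_le v).antisymm (hce ▸ (hc.mem_Icc_topColor he).2)⟩

theorem colorsAt_eq_Icc (hc : IsIntervalColoring G t c) (v : V) :
    ∃ a ≤ topColor G c v, colorsAt G c v = Icc (a + 1) (topColor G c v) := by
  rcases (colorsAt G c v).eq_empty_or_nonempty with hempty | hne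
  · exact ⟨0, by simp [topColor, hempty]⟩
  have hbdd : BddAbove (colorsAt G c v) := bddAbove_Icc.mono (hc.colorsAt_subset v)
  have hpos : 1 ≤ sInf (colorsAt G c v) := (hc.colorsAt_subset v (Nat.sInf_mem hne)).1
  refine ⟨sInf (colorsAt G c v) - 1,
    (Nat.sub_le _ _).trans (csInf_le_csSup hne (OrderBot.bddBelow _) hbdd), ?_⟩
  rw [Nat.sub_add_cancel hpos]
  exact (hne.ordConnected_iff_of_bdd (OrderBot.bddBelow _) hbdd).1
    ((isIntervalColoring_iff.1 hc).2.2 v)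

end IsIntervalColoring

theorem IsIntervalColoring.bijOn_mod_of_isRegularGraph [Finite V] (hc : IsIntervalColoring G t c)
    (hreg : IsRegularGraph G r) (v : V) :
    BijOn (fun w => c s(v, w) % r) (G.neighborSet v) (Iio r) := by
  obtain ⟨-, hinj, hconn⟩ := isIntervalColoring_iff.1 hc
  have hcard : (colorsAt G c v).ncard = r := by rw [colorsAt, (hinj v).ncard_image, hreg v]
  have hinjmod : (G.neighborSet v).InjOn (fun w => c s(v, w) % r) :=
    ((hconn v).injOn_mod ((toFinite _).image _) hcard.le).comp (hinj v) (mapsTo_image _ _)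
  have hmaps : MapsTo (fun w => c s(v, w) % r) (G.neighborSet v) (Iio r) := fun w hw =>
    Nat.mod_lt _ (hreg v ▸ (ncard_pos (toFinite _)).2 ⟨w, hw⟩)
  refine ⟨hmaps, hinjmod, ?_⟩
  have himage := eq_of_subset_of_ncard_le hmaps.image_subset
    (by rw [hinjmod.ncard_image, hreg v, ncard_Iio_nat]) (toFinite _)
  exact himage.symm.subset

theorem IsRegularGraph.le_card [Finite V] [Nonempty V] (hreg : IsRegularGraph G r) :
    r ≤ Nat.card V := by
  obtain ⟨v⟩ := ‹Nonempty V›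
  exact hreg v ▸ ncard_le_card _

theorem HasIntervalColoring.one_le {v w : V} (h : HasIntervalColoring G t) (hvw : G.Adj v w) :
    1 ≤ t :=
  h.elim fun _ hc => (hc.1 s(v, w) hvw).1.trans (hc.1 s(v, w) hvw).2

theorem bddAbove_setOf_hasIntervalColoring [Fintype V] (G : SimpleGraph V) :
    BddAbove {t | HasIntervalColoring G t} :=
  ⟨Fintype.card (Sym2 V), fun _ ⟨_, hc⟩ => hc.le_card_sym2⟩

end IntervalColoring

theorem lexProd_adj {α β : Type*} {G : SimpleGraph α} {H : SimpleGraph β} {u u' : α}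
    {v v' : β} :
    (lexProd G H).Adj (u, v) (u', v') ↔ G.Adj u u' ∨ u = u' ∧ H.Adj v v' :=
  Iff.rfl

section LexColoring

variable {α β : Type*} [Fintype β] {G : SimpleGraph α} {H : SimpleGraph β} {t r : ℕ}
  {c : Sym2 α → ℕ} {d : Sym2 β → ℕ}

/-- The addition table of `ℤ/|β|`, transported to `β`: a symmetric Latin square. -/
noncomputable def latinSquare (v w : β) : ℕ :=
  (Fintype.equivFin β v + Fintype.equivFin β w : Fin (Fintype.card β))

theorem latinSquare_comm (v w : β) : latinSquare v w = latinSquare w v := by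
  rw [latinSquare, latinSquare, add_comm]

theorem latinSquare_lt_card (v w : β) : latinSquare v w < Fintype.card β :=
  Fin.is_lt _

theorem latinSquare_injective (v : β) : Function.Injective (latinSquare v) := by
  intro w₁ w₂ h
  exact (Fintype.equivFin β).injective (add_left_cancel (Fin.ext h))

theorem exists_latinSquare_eq (v : β) {j : ℕ} (hj : j < Fintype.card β) :
    ∃ w, latinSquare v w = j := by
  have : Nonempty β := ⟨v⟩
  exact ⟨(Fintype.equivFin β).symm (⟨j, hj⟩ - Fintype.equivFin β v), by simp [latinSquare]⟩

open Classical in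
noncomputable def lexColoring (G : SimpleGraph α) (c : Sym2 α → ℕ) (d : Sym2 β → ℕ) :
    Sym2 (α × β) → ℕ :=
  Sym2.lift ⟨fun p q =>
    if p.1 = q.1 then topColor G c p.1 * Fintype.card β + d s(p.2, q.2) + 1
    else (c s(p.1, q.1) - 1) * Fintype.card β + latinSquare p.2 q.2 + 1, fun p q => by
      by_cases h : p.1 = q.1
      · simp [h, Sym2.eq_swap]
      · simp [h, Ne.symm h, Sym2.eq_swap, latinSquare_comm]⟩

theorem lexColoring_mk_of_adj {u u' : α} (v v' : β) (h : G.Adj u u') :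
    lexColoring G c d s((u, v), (u', v')) =
      (c s(u, u') - 1) * Fintype.card β + latinSquare v v' + 1 := by
  simp [lexColoring, h.ne]

theorem lexColoring_mk_fiber (u : α) (v w : β) :
    lexColoring G c d s((u, v), (u, w)) = topColor G c u * Fintype.card β + d s(v, w) + 1 := by
  simp [lexColoring]

theorem mem_colorsAt_lexColoring_of_adj {u u' : α} (v : β) (h : G.Adj u u') {j : ℕ}
    (hj : j < Fintype.card β) :
    (c s(u, u') - 1) * Fintype.card β + j + 1 ∈
      colorsAt (lexProd G H) (lexColoring G c d) (u, v) := by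
  obtain ⟨v', rfl⟩ := exists_latinSquare_eq v hj
  exact ⟨(u', v'), Or.inl h, lexColoring_mk_of_adj v v' h⟩

theorem mem_colorsAt_lexColoring_top (u : α) {v : β}
    (hd : SurjOn (fun w => d s(v, w)) (H.neighborSet v) (Iio r)) {j : ℕ} (hj : j < r) :
    topColor G c u * Fintype.card β + j + 1 ∈
      colorsAt (lexProd G H) (lexColoring G c d) (u, v) := by
  obtain ⟨w, hw, rfl⟩ := hd hj
  exact ⟨(u, w), Or.inr ⟨rfl, hw⟩, lexColoring_mk_fiber u v w⟩

theorem colorsAt_lexColoring {u : α} {v : β} {a : ℕ} (hc : IsIntervalColoring G t c)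
    (ha : a ≤ topColor G c u) (hS : colorsAt G c u = Icc (a + 1) (topColor G c u))
    (hd : BijOn (fun w => d s(v, w)) (H.neighborSet v) (Iio r)) (hr : r ≤ Fintype.card β) :
    colorsAt (lexProd G H) (lexColoring G c d) (u, v) =
      Icc (a * Fintype.card β + 1) (topColor G c u * Fintype.card β + r) := by
  have : Nonempty β := ⟨v⟩
  apply Subset.antisymm
  · rintro _ ⟨⟨u', v'⟩, hadj, rfl⟩
    rcases lexProd_adj.1 hadj with h | ⟨rfl, h⟩
    · obtain ⟨k, hk⟩ : ∃ k, c s(u, u') = k + 1 :=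
        ⟨_, (Nat.sub_add_cancel (hc.mem_Icc_topColor h).1).symm⟩
      have hkS : k + 1 ∈ Icc (a + 1) (topColor G c u) := hk ▸ hS ▸ ⟨u', h, rfl⟩
      have h₁ := Nat.mul_le_mul_right (Fintype.card β) (Nat.le_of_succ_le_succ hkS.1)
      have h₂ := Nat.mul_le_mul_right (Fintype.card β) hkS.2
      have hl := latinSquare_lt_card v v'
      rw [add_one_mul] at h₂
      dsimp only
      rw [mem_Icc, lexColoring_mk_of_adj v v' h, hk, Nat.add_sub_cancel]
      omega
    · have : d s(v, v') < r := hd.mapsTo h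
      have := Nat.mul_le_mul_right (Fintype.card β) ha
      dsimp only
      rw [mem_Icc, lexColoring_mk_fiber]
      omega
  · rintro y ⟨hy₁, hy₂⟩
    obtain ⟨k, j, hj, rfl⟩ :=
      Nat.exists_eq_mul_add_add_one (Fintype.card_pos (α := β)) (by omega : 1 ≤ y)
    rcases lt_or_ge k (topColor G c u) with hk | hk
    · have hak : a < k + 1 :=
        Nat.lt_of_mul_lt_mul_right (a := Fintype.card β) (by rw [add_one_mul]; omega)
      obtain ⟨u', h, hcu : c s(u, u') = k + 1⟩ : k + 1 ∈ colorsAt G c u := hS ▸ ⟨by omega, hk⟩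
      simpa [hcu] using mem_colorsAt_lexColoring_of_adj (H := H) (c := c) (d := d) v h hj
    · have hkm : k < topColor G c u + 1 :=
        Nat.lt_of_mul_lt_mul_right (a := Fintype.card β) (by rw [add_one_mul]; omega)
      obtain rfl : k = topColor G c u := by omega
      exact mem_colorsAt_lexColoring_top u hd.surjOn (by omega)

theorem injOn_lexColoring (hc : IsIntervalColoring G t c)
    (hd : ∀ v, (H.neighborSet v).InjOn (fun w => d s(v, w))) (p : α × β) :
    ((lexProd G H).neighborSet p).InjOn (fun q => lexColoring G c d s(p, q)) := by
  obtain ⟨u, v⟩ := p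
  have below {u' : α} (v' : β) (h : G.Adj u u') :
      lexColoring G c d s((u, v), (u', v')) ≤ topColor G c u * Fintype.card β := by
    obtain ⟨h₁, h₂⟩ := hc.mem_Icc_topColor h
    have hblock := Nat.mul_le_mul_right (Fintype.card β)
      (Nat.sub_add_cancel h₁ ▸ h₂ : c s(u, u') - 1 + 1 ≤ _)
    have hl := latinSquare_lt_card v v'
    rw [add_one_mul] at hblock
    rw [lexColoring_mk_of_adj v v' h]
    omega
  have above (w : β) : topColor G c u * Fintype.card β < lexColoring G c d s((u, v), (u, w)) := by
    rw [lexColoring_mk_fiber]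
    omega
  rintro ⟨u₁, w₁⟩ h₁ ⟨u₂, w₂⟩ h₂ (heq : lexColoring G c d _ = lexColoring G c d _)
  rcases lexProd_adj.1 h₁ with hG₁ | ⟨rfl, hH₁⟩ <;> rcases lexProd_adj.1 h₂ with hG₂ | ⟨rfl, hH₂⟩
  · rw [lexColoring_mk_of_adj v w₁ hG₁, lexColoring_mk_of_adj v w₂ hG₂] at heq
    obtain ⟨hc₁₂, hl₁₂⟩ := Nat.eq_and_eq_of_mul_add_eq (latinSquare_lt_card v w₁)
      (latinSquare_lt_card v w₂) (Nat.add_right_cancel heq)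
    have := (hc.mem_Icc_topColor hG₁).1
    have := (hc.mem_Icc_topColor hG₂).1
    obtain rfl : u₁ = u₂ := (isIntervalColoring_iff.1 hc).2.1 u hG₁ hG₂ (by dsimp only; omega)
    rw [latinSquare_injective v hl₁₂]
  · exact absurd heq ((below w₁ hG₁).trans_lt (above w₂)).ne
  · exact absurd heq ((below w₂ hG₂).trans_lt (above w₁)).ne'
  · rw [hd v hH₁ hH₂ (by simpa [lexColoring_mk_fiber] using heq)]

theorem isIntervalColoring_lexColoring (hc : IsIntervalColoring G t c) (ht : 1 ≤ t)
    (hd : ∀ v, BijOn (fun w => d s(v, w)) (H.neighborSet v) (Iio r))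
    (hr : r ≤ Fintype.card β) :
    IsIntervalColoring (lexProd G H) (t * Fintype.card β + r) (lexColoring G c d) := by
  have hcolors (u : α) (v : β) : ∃ a, colorsAt (lexProd G H) (lexColoring G c d) (u, v) =
      Icc (a * Fintype.card β + 1) (topColor G c u * Fintype.card β + r) := by
    obtain ⟨a, ha, hS⟩ := hc.colorsAt_eq_Icc u
    exact ⟨a, colorsAt_lexColoring hc ha hS (hd v) hr⟩
  refine isIntervalColoring_iff.2
    ⟨?_, injOn_lexColoring hc fun v => (hd v).injOn, fun ⟨u, v⟩ => ?_⟩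
  · rw [image_edgeSet_eq_iUnion_colorsAt]
    refine Subset.antisymm (iUnion_subset fun ⟨u, v⟩ => ?_) ?_
    · obtain ⟨a, h⟩ := hcolors u v
      rw [h]
      exact Icc_subset_Icc (by omega) (by gcongr; exact hc.topColor_le u)
    rintro y ⟨hy₁, hy₂⟩
    have hn : 0 < Fintype.card β := Nat.pos_of_ne_zero fun h => by rw [h] at hy₂ hr; omega
    obtain ⟨v⟩ := Fintype.card_pos_iff.1 hn
    obtain ⟨k, j, hj, rfl⟩ := Nat.exists_eq_mul_add_add_one hn hy₁
    refine mem_iUnion.2 ?_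
    rcases lt_or_ge k t with hk | hk
    · obtain ⟨e, he, hce⟩ := hc.2.1 (k + 1) (by omega) hk
      induction e using Sym2.ind with
      | h u u' => exact ⟨(u, v), by
          simpa [hce] using mem_colorsAt_lexColoring_of_adj (H := H) (c := c) (d := d) v he hj⟩
    · have hkt : k < t + 1 :=
        Nat.lt_of_mul_lt_mul_right (a := Fintype.card β) (by rw [add_one_mul]; omega)
      obtain rfl : k = t := by omega
      obtain ⟨u, hu⟩ := hc.exists_topColor_eq ht
      exact ⟨(u, v), hu ▸ mem_colorsAt_lexColoring_top u (hd v).surjOn (by omega)⟩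
  · obtain ⟨a, h⟩ := hcolors u v
    rw [h]
    exact ordConnected_Icc

theorem hasIntervalColoring_lexProd (hG : HasIntervalColoring G t) (ht : 1 ≤ t)
    (hH : IntervalColorable H) (hreg : IsRegularGraph H r) :
    HasIntervalColoring (lexProd G H) (t * Fintype.card β + r) := by
  obtain ⟨c, hc⟩ := hG
  obtain ⟨s, hs, cH, hcH⟩ := hH
  obtain ⟨v, -, -⟩ := hcH.exists_adj hs
  have : Nonempty β := ⟨v⟩
  exact ⟨_, isIntervalColoring_lexColoring (d := fun e => cH e % r) hc ht
    (hcH.bijOn_mod_of_isRegularGraph hreg)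
    (Nat.card_eq_fintype_card (α := β) ▸ hreg.le_card)⟩

end LexColoring

/-- If `G, H ∈ 𝔑`, `H` is `r`-regular and `|V(H)| = n`, then `G[H] ∈ 𝔑`;
moreover `w(G[H]) ≤ w(G)·n + r` and `W(G[H]) ≥ W(G)·n + r`. -/
theorem lexProd_interval_colorable {α β : Type*} [Fintype α] [Fintype β]
    (G : SimpleGraph α) (H : SimpleGraph β) (r n : ℕ)
    (hG : IntervalColorable G) (hH : IntervalColorable H)
    (hreg : IsRegularGraph H r) (hcard : Fintype.card β = n) :
    IntervalColorable (lexProd G H) ∧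
    wNum (lexProd G H) ≤ wNum G * n + r ∧
    WNum (lexProd G H) ≥ WNum G * n + r := by
  subst hcard
  obtain ⟨s, hs, c, hc⟩ := hG
  obtain ⟨u, u', hu⟩ := hc.exists_adj hs
  have lex {t : ℕ} (h : HasIntervalColoring G t) :
      HasIntervalColoring (lexProd G H) (t * Fintype.card β + r) :=
    hasIntervalColoring_lexProd h (h.one_le hu) hH hreg
  have hne : {t | HasIntervalColoring G t}.Nonempty := ⟨s, c, hc⟩
  have hw := lex (Nat.sInf_mem hne)
  have hW := lex (Nat.sSup_mem hne (bddAbove_setOf_hasIntervalColoring G))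
  obtain ⟨_, hsH, cH, hcH⟩ := hH
  obtain ⟨v, -, -⟩ := hcH.exists_adj hsH
  exact ⟨⟨_, hw.one_le (v := (u, v)) (w := (u', v)) (Or.inl hu), hw⟩,
    Nat.sInf_le hw, le_csSup (bddAbove_setOf_hasIntervalColoring _) hW⟩
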